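/- arXiv:1707.07944 — 2 statements merged into one kernel-verified Lean document; each statement's English description precedes it below -/
import Mathlib

section
/- Let C (resp. D) be a small category equipped with an action of a small symmetric monoidal category T (resp. T') whose unit is an initial object, Φ : C → D a functor, Ψ : T → T' a strong monoidal functor, and M a Grothendieck abelian category. Assume Φ and Ψ are compatible with the actions, i.e. the square formed by the two actions, Ψ × Φ and Φ commutes up to natural isomorphism. Assume moreover that for every object a of T' there exist an object t of T and a morphism a → Ψ(t) in T' (this holds, e.g., if Ψ is essentially surjective). Then the precomposition functor Φ^* : (D, M) → (C, M) sends stably null functors to stably null functors. -/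
/-!
Statement 6: Let `C` (resp. `D`) be a small category with an action of a small symmetric
monoidal category `T` (resp. `T'`) with initial unit, `Φ : C ⥤ D` and `Ψ : T ⥤ T'` a strong
monoidal functor, compatible with the actions up to natural isomorphism, and `M` a
Grothendieck abelian category.  If every object `a` of `T'` admits a morphism `a ⟶ Ψ(t)`
for some `t`, then precomposition by `Φ` sends stably null functors to stably null functors.
-/

open CategoryTheory CategoryTheory.Limits CategoryTheory.MonoidalCategory

attribute [local instance] CategoryTheory.endofunctorMonoidalCategory

universe w v u

variable {C D : Type u} [SmallCategory C] [SmallCategory D]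
variable {T T' : Type u} [SmallCategory T] [SmallCategory T']
  [MonoidalCategory T] [MonoidalCategory T'] [SymmetricCategory T] [SymmetricCategory T']
variable {M : Type v} [Category.{u} M] [Abelian M] [HasColimits M] [AB5 M] [HasSeparator M]

/-- The natural transformation `𝟭 ⟶ τ_t` induced by the unique morphism from the
(initial) unit of `T` to `t`, for an action `τ` of `T` given as a strong monoidal functor
into endofunctors. -/
noncomputable def iAct {E : Type u} [SmallCategory E] (τ : T ⥤ (E ⥤ E)) [τ.Monoidal]
    (hT : IsInitial (𝟙_ T)) (t : T) : (𝟭 E : E ⥤ E) ⟶ τ.obj t :=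
  (Functor.LaxMonoidal.ε τ : (𝟭 E : E ⥤ E) ⟶ τ.obj (𝟙_ T)) ≫ τ.map (hT.to t)

/-- `i_t(F) : F ⟶ τ_t(F)` for a functor `F : E ⥤ M`, where `T` acts on the functor category
by precomposition with the action on `E`. -/
noncomputable def iFun {E : Type u} [SmallCategory E] (τ : T ⥤ (E ⥤ E)) [τ.Monoidal]
    (hT : IsInitial (𝟙_ T)) (t : T) (F : E ⥤ M) : F ⟶ τ.obj t ⋙ F :=
  F.leftUnitor.inv ≫ CategoryTheory.Functor.whiskerRight (iAct τ hT t) F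

/-- A functor `F : E ⥤ M` is stably null (for the action of `T`) if the sum of the
subfunctors `κ_t(F) = ker (i_t(F))` over all objects `t` of `T` is all of `F`, i.e. the
canonical morphism from the coproduct of these kernels to `F` is an epimorphism. -/
noncomputable def StablyNullFun {E : Type u} [SmallCategory E] (τ : T ⥤ (E ⥤ E)) [τ.Monoidal]
    (hT : IsInitial (𝟙_ T)) (F : E ⥤ M) : Prop :=
  Epi (Sigma.desc fun t : T => kernel.ι (iFun τ hT t F))


/-- Unfolding lemma for `iAct`. -/
lemma iAct_def {E : Type u} [SmallCategory E] (τ : T ⥤ (E ⥤ E)) [τ.Monoidal]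
    (hT : IsInitial (𝟙_ T)) (t : T) :
    iAct τ hT t = (Functor.LaxMonoidal.ε τ : (𝟭 E : E ⥤ E) ⟶ τ.obj (𝟙_ T)) ≫ τ.map (hT.to t) :=
  rfl

/-- Key step: if `a ⟶ Ψ t`, then the kernel `κ_a(F)`, precomposed with `Φ`, is killed by
`i_t(Φ ⋙ F)`. -/
lemma key_zero
    (τC : T ⥤ (C ⥤ C)) [τC.Monoidal] (τD : T' ⥤ (D ⥤ D)) [τD.Monoidal]
    (hT : IsInitial (𝟙_ T)) (hT' : IsInitial (𝟙_ T'))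
    (Φ : C ⥤ D) (Ψ : T ⥤ T') [Ψ.Monoidal]
    (compat : τC ⋙ (Functor.whiskeringRight C C D).obj Φ ≅ Ψ ⋙ τD ⋙ (Functor.whiskeringLeft C D D).obj Φ)
    (F : D ⥤ M) (a : T') (t : T) (f : a ⟶ Ψ.obj t) :
    CategoryTheory.Functor.whiskerLeft Φ (kernel.ι (iFun τD hT' a F)) ≫ iFun τC hT t (Φ ⋙ F) = 0 := by
  ext c
  have happ : (iFun τC hT t (Φ ⋙ F)).app c = F.map (Φ.map ((iAct τC hT t).app c)) := by
    simp [iFun]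
  have hnat := NatTrans.congr_app (compat.hom.naturality (hT.to t)) c
  simp only [Functor.comp_map, Functor.whiskeringRight_obj_map, Functor.whiskeringLeft_obj_map, NatTrans.comp_app,
    CategoryTheory.Functor.whiskerRight_app, CategoryTheory.Functor.whiskerLeft_app] at hnat
  have hΨ : Ψ.map (hT.to t) = Functor.OplaxMonoidal.η Ψ ≫ hT'.to a ≫ f := by
    have h1 : Functor.LaxMonoidal.ε Ψ ≫ Ψ.map (hT.to t) = hT'.to a ≫ f := hT'.hom_ext _ _
    rw [← h1, ← Category.assoc, Functor.Monoidal.η_ε, Category.id_comp]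
  have hτD : (Functor.OplaxMonoidal.η τD).app (Φ.obj c) ≫ (iAct τD hT' a).app (Φ.obj c)
      = (τD.map (hT'.to a)).app (Φ.obj c) := by
    rw [iAct_def, NatTrans.comp_app, ← Category.assoc, ← NatTrans.comp_app, Functor.Monoidal.η_ε]
    simp
  have hcancel : (compat.hom.app t).app c ≫ (compat.inv.app t).app c
      = 𝟙 (Φ.obj ((τC.obj t).obj c)) := by
    rw [← NatTrans.comp_app, Iso.hom_inv_id_app]
    rfl
  set δ : Φ.obj c ⟶ Φ.obj c :=
    Φ.map ((Functor.LaxMonoidal.ε τC).app c) ≫ (compat.hom.app (𝟙_ T)).app c ≫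
      (τD.map (Functor.OplaxMonoidal.η Ψ)).app (Φ.obj c) ≫
        (Functor.OplaxMonoidal.η τD).app (Φ.obj c) with hδ
  have key' : Φ.map ((iAct τC hT t).app c) ≫ (compat.hom.app t).app c
      = δ ≫ (iAct τD hT' a).app (Φ.obj c) ≫ (τD.map f).app (Φ.obj c) := by
    rw [iAct_def, NatTrans.comp_app, Functor.map_comp, Category.assoc, hnat, hΨ, hδ]
    simp only [Functor.map_comp, NatTrans.comp_app, Category.assoc]
    rw [← hτD]
    simp only [Category.assoc]
  have key : Φ.map ((iAct τC hT t).app c) =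
      δ ≫ (iAct τD hT' a).app (Φ.obj c) ≫ (τD.map f).app (Φ.obj c) ≫ (compat.inv.app t).app c := by
    rw [← Category.comp_id (Φ.map ((iAct τC hT t).app c)), ← hcancel, ← Category.assoc, key']
    simp only [Category.assoc]
  have hker : (kernel.ι (iFun τD hT' a F)).app (Φ.obj c) ≫
      F.map ((iAct τD hT' a).app (Φ.obj c)) = 0 := by
    have h0 := NatTrans.congr_app (kernel.condition (iFun τD hT' a F)) (Φ.obj c)
    simp only [NatTrans.comp_app, zero_app] at h0
    have h1 : (iFun τD hT' a F).app (Φ.obj c) = F.map ((iAct τD hT' a).app (Φ.obj c)) := by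
      simp [iFun]
    rw [h1] at h0
    exact h0
  simp only [NatTrans.comp_app, CategoryTheory.Functor.whiskerLeft_app, happ, key, Functor.map_comp,
    zero_app]
  rw [← NatTrans.naturality_assoc (kernel.ι (iFun τD hT' a F)) δ, reassoc_of% hker]
  simp

theorem precomposition_preserves_stablyNull
    (τC : T ⥤ (C ⥤ C)) [τC.Monoidal] (τD : T' ⥤ (D ⥤ D)) [τD.Monoidal]
    (hT : IsInitial (𝟙_ T)) (hT' : IsInitial (𝟙_ T'))
    (Φ : C ⥤ D) (Ψ : T ⥤ T') [Ψ.Monoidal]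
    -- compatibility of `Φ` and `Ψ` with the two actions, up to natural isomorphism
    (compat : τC ⋙ (Functor.whiskeringRight C C D).obj Φ ≅ Ψ ⋙ τD ⋙ (Functor.whiskeringLeft C D D).obj Φ)
    -- every object of `T'` maps to an object in the image of `Ψ`
    (hsurj : ∀ a : T', ∃ t : T, Nonempty (a ⟶ Ψ.obj t))
    (F : D ⥤ M) (hF : StablyNullFun τD hT' F) :
    StablyNullFun τC hT (Φ ⋙ F) := by
  classical
  choose t ht using hsurj
  let G : (D ⥤ M) ⥤ (C ⥤ M) := (Functor.whiskeringLeft C D M).obj Φ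
  have hFepi : Epi (Sigma.desc fun a : T' => kernel.ι (iFun τD hT' a F)) := hF
  have hGepi : Epi (G.map (Sigma.desc fun a : T' => kernel.ι (iFun τD hT' a F))) :=
    inferInstance
  have hcmp := sigmaComparison_map_desc G (fun a : T' => kernel (iFun τD hT' a F)) F
    (fun a : T' => kernel.ι (iFun τD hT' a F))
  have hepi : Epi (Sigma.desc fun a : T' => G.map (kernel.ι (iFun τD hT' a F))) := by
    rw [← hcmp]
    exact epi_comp _ _
  have hzero : ∀ a : T',
      G.map (kernel.ι (iFun τD hT' a F)) ≫ iFun τC hT (t a) (Φ ⋙ F) = 0 := fun a =>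
    key_zero τC τD hT hT' Φ Ψ compat F a (t a) (ht a).some
  have hfac : (Sigma.desc fun a : T' =>
        kernel.lift (iFun τC hT (t a) (Φ ⋙ F)) (G.map (kernel.ι (iFun τD hT' a F))) (hzero a) ≫
          Sigma.ι (fun s : T => kernel (iFun τC hT s (Φ ⋙ F))) (t a)) ≫
      (Sigma.desc fun s : T => kernel.ι (iFun τC hT s (Φ ⋙ F))) =
      Sigma.desc fun a : T' => G.map (kernel.ι (iFun τD hT' a F)) := by
    ext a
    simp
  show Epi (Sigma.desc fun s : T => kernel.ι (iFun τC hT s (Φ ⋙ F)))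
  rw [← hfac] at hepi
  exact epi_of_epi (Sigma.desc fun a : T' =>
    kernel.lift (iFun τC hT (t a) (Φ ⋙ F)) (G.map (kernel.ι (iFun τD hT' a F))) (hzero a) ≫
      Sigma.ι (fun s : T => kernel (iFun τC hT s (Φ ⋙ F))) (t a)) _
end

section
/- Let (C,+,0) be a small symmetric monoidal category whose unit 0 is an initial object, M a Grothendieck abelian category, t an object of C and X a functor in (C, M). If the two canonical morphisms t → t + t (namely t ≅ t+0 → t+t and t ≅ 0+t → t+t, induced by the unique morphism 0 → t on one of the two factors) induce the same morphism τ_t(X) → τ_{t+t}(X), then κ_t(δ_t(X)) = δ_t(X); equivalently, the canonical morphism i_t(δ_t(X)) : δ_t(X) → τ_t(δ_t(X)) is zero. -/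
/-!
Statement 7: Let `(C,+,0)` be a small symmetric monoidal category whose unit is initial,
`M` a Grothendieck abelian category, `t : C` and `X : C ⥤ M`. If the two canonical morphisms
`t → t + t` induce the same morphism `τ_t(X) → τ_{t+t}(X)`, then `κ_t(δ_t(X)) = δ_t(X)`,
i.e. the canonical morphism `i_t(δ_t(X)) : δ_t(X) → τ_t(δ_t(X))` is zero.
-/

open CategoryTheory CategoryTheory.Limits CategoryTheory.MonoidalCategory

universe w v u

variable {C : Type u} [SmallCategory C] [MonoidalCategory C] [SymmetricCategory C]
variable {M : Type v} [Category.{w} M] [Abelian M]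

/-- The natural transformation `𝟭 C ⟶ (u ⊗ -)` induced by the unique morphism `0 ⟶ u`
from the (initial) monoidal unit. -/
@[simps]
def unitToTensorLeft (hI : IsInitial (𝟙_ C)) (u : C) : (𝟭 C : C ⥤ C) ⟶ tensorLeft u where
  app x := (λ_ x).inv ≫ (hI.to u ▷ x)
  naturality x y f := by
    dsimp
    rw [Category.assoc, ← whisker_exchange, leftUnitor_inv_naturality_assoc]

/-- `i_t(X) : X ⟶ τ_t(X)`, the canonical morphism from `X` to its translation
`τ_t(X) = X(t + -)`. -/
def iTrans (hI : IsInitial (𝟙_ C)) (t : C) (X : C ⥤ M) : X ⟶ tensorLeft t ⋙ X :=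
  X.leftUnitor.inv ≫ CategoryTheory.Functor.whiskerRight (unitToTensorLeft hI t) X

/-- The natural transformation `tensorLeft t ⟶ tensorLeft t'` induced by `a : t ⟶ t'`. -/
@[simps]
def tensorLeftMap {t t' : C} (a : t ⟶ t') : (tensorLeft t : C ⥤ C) ⟶ tensorLeft t' where
  app x := a ▷ x
  naturality x y f := by simpa using whisker_exchange a f

/-- If the two canonical morphisms `t → t + t` induce the same morphism
`τ_t(X) → τ_{t+t}(X)`, then `i_t(δ_t(X)) = 0`, where `δ_t(X)` is the cokernel of
`i_t(X)`; equivalently, `κ_t(δ_t(X)) = δ_t(X)`. -/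
theorem iTrans_cokernel_eq_zero (hI : IsInitial (𝟙_ C)) (t : C) (X : C ⥤ M)
    (h : CategoryTheory.Functor.whiskerRight (tensorLeftMap ((ρ_ t).inv ≫ (t ◁ hI.to t))) X =
      CategoryTheory.Functor.whiskerRight (tensorLeftMap ((λ_ t).inv ≫ (hI.to t ▷ t))) X) :
    iTrans hI t (cokernel (iTrans hI t X)) = 0 ∧
      kernelSubobject (iTrans hI t (cokernel (iTrans hI t X))) = ⊤ := by
  -- First: `i_t(τ_t X) = τ_t(i_t X)` as morphisms `τ_t X ⟶ τ_t τ_t X`.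
  have key : iTrans hI t (tensorLeft t ⋙ X) =
      CategoryTheory.Functor.whiskerLeft (tensorLeft t) (iTrans hI t X) := by
    ext x
    have hx := congrArg (fun φ => φ ≫ X.map (α_ t t x).hom) (NatTrans.congr_app h x)
    dsimp [iTrans, unitToTensorLeft, tensorLeftMap] at hx ⊢
    rw [← X.map_comp, ← X.map_comp] at hx
    simp only [Category.id_comp]
    have e1 : ((λ_ t).inv ≫ hI.to t ▷ t) ▷ x =
        (λ_ (t ⊗ x)).inv ≫ hI.to t ▷ (t ⊗ x) ≫ (α_ t t x).inv := by coherence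
    have e2 : ((ρ_ t).inv ≫ t ◁ hI.to t) ▷ x =
        (t ◁ ((λ_ x).inv ≫ hI.to t ▷ x)) ≫ (α_ t t x).inv := by coherence
    rw [e1, e2] at hx
    simpa using hx
  -- Naturality of `iTrans` with respect to the cokernel projection.
  have nat : cokernel.π (iTrans hI t X) ≫ iTrans hI t (cokernel (iTrans hI t X)) =
      iTrans hI t (tensorLeft t ⋙ X) ≫
        CategoryTheory.Functor.whiskerLeft (tensorLeft t) (cokernel.π (iTrans hI t X)) := by
    ext x
    dsimp [iTrans]
    have hn := ((cokernel.π (iTrans hI t X)).naturality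
      ((λ_ x).inv ≫ hI.to t ▷ x)).symm
    simp at hn
    simp only [Category.id_comp, unitToTensorLeft_app, Functor.map_comp,
      MonoidalCategory.whiskerLeft_comp, Category.assoc]
    exact hn
  have hzero : iTrans hI t (cokernel (iTrans hI t X)) = 0 := by
    rw [← cancel_epi (cokernel.π (iTrans hI t X)), nat, key, Limits.comp_zero]
    ext x
    dsimp [iTrans, unitToTensorLeft]
    have hc := NatTrans.congr_app (cokernel.condition (iTrans hI t X)) (t ⊗ x)
    simp only [iTrans, NatTrans.comp_app, Functor.leftUnitor_inv_app, Functor.whiskerRight_app,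
      unitToTensorLeft_app, Category.id_comp, X.map_comp, Category.assoc,
      Limits.zero_app] at hc
    simp only [Category.id_comp, X.map_comp, Category.assoc, Limits.zero_app]
    exact hc
  exact ⟨hzero, by rw [hzero]; exact kernelSubobject_zero⟩
end
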